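/- arXiv:2504.09790 — 3 statements merged into one kernel-verified Lean document; each statement's English description precedes it below -/
import Mathlib

section
/- For all natural numbers n, C(2n, n) ≤ 4^n / sqrt(pi * n) * (1 + 1/n) for n ≥ 1, and more precisely 4^n/sqrt(pi n) * (1 - 1/(4n)) ≤ C(2n,n) ≤ 4^n/sqrt(pi n) for all n ≥ 1. -/
open Real

lemma central_binom_key (n : ℕ) :
    (((2 * n).choose n : ℝ))^2 * (2 * n + 1) * Real.Wallis.W n = 16 ^ n := by
  have hfac : ((2 * n).choose n : ℝ) * (n.factorial : ℝ) * (n.factorial : ℝ)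
      = ((2*n).factorial : ℝ) := by
    have := Nat.choose_mul_factorial_mul_factorial (show n ≤ 2 * n by omega)
    rw [show 2 * n - n = n by omega] at this
    exact_mod_cast congrArg (Nat.cast : ℕ → ℝ) this
  have hW := Real.Wallis.W_eq_factorial_ratio n
  have h1 : (0:ℝ) < (n.factorial : ℝ) := by positivity
  have h2 : (0:ℝ) < 2 * (n:ℝ) + 1 := by positivity
  have hcpos : (0:ℝ) < ((2 * n).choose n : ℝ) := by
    exact_mod_cast Nat.choose_pos (show n ≤ 2 * n by omega)
  have h4 : ((2*n).factorial : ℝ)^2 = (((2 * n).choose n : ℝ))^2 * (n.factorial : ℝ)^4 := by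
    rw [← hfac]; ring
  rw [hW, h4, show (2:ℝ)^(4*n) = 16 ^ n by rw [pow_mul]; norm_num]
  field_simp

/-- Effective bounds for the central binomial coefficient: for `n ≥ 1`,
`C(2n,n) ≤ 4^n/√(π n) * (1 + 1/n)` and
`4^n/√(π n) * (1 - 1/(4n)) ≤ C(2n,n) ≤ 4^n/√(π n)`. -/
theorem central_binom_bounds (n : ℕ) (hn : 1 ≤ n) :
    (((2 * n).choose n : ℝ) ≤ 4 ^ n / Real.sqrt (Real.pi * n) * (1 + 1 / n)) ∧
    (4 ^ n / Real.sqrt (Real.pi * n) * (1 - 1 / (4 * n)) ≤ ((2 * n).choose n : ℝ)) ∧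
    (((2 * n).choose n : ℝ) ≤ 4 ^ n / Real.sqrt (Real.pi * n)) := by
  have hn1 : (1:ℝ) ≤ (n:ℝ) := by exact_mod_cast hn
  have hnpos : (0:ℝ) < (n:ℝ) := by linarith
  set c : ℝ := ((2 * n).choose n : ℝ) with hc
  have hcpos : 0 < c := by
    rw [hc]; exact_mod_cast Nat.choose_pos (show n ≤ 2 * n by omega)
  set s : ℝ := Real.sqrt (Real.pi * n) with hs
  have hspos : 0 < s := Real.sqrt_pos.mpr (by positivity)
  have hs2 : s ^ 2 = Real.pi * n := Real.sq_sqrt (by positivity)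
  have hkey := central_binom_key n
  have hWle := Real.Wallis.W_le n
  have hleW := Real.Wallis.le_W n
  have hWpos := Real.Wallis.W_pos n
  have h16 : (16:ℝ) ^ n = (4:ℝ)^n * (4:ℝ)^n := by
    rw [← mul_pow]; norm_num
  have h4pos : (0:ℝ) < (4:ℝ) ^ n := by positivity
  have hpi := Real.pi_pos
  -- upper bound: c ≤ 4^n / s
  have hub : c ≤ 4 ^ n / s := by
    rw [le_div_iff₀ hspos]
    have h1 : Real.pi * n ≤ (2 * n + 1) * Real.Wallis.W n := by
      have h2 : ((2:ℝ) * n + 1) / (2 * n + 2) * (Real.pi / 2) ≤ Real.Wallis.W n := hleW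
      have h3 : (0:ℝ) < 2 * (n:ℝ) + 2 := by linarith
      rw [div_mul_eq_mul_div, div_le_iff₀ h3] at h2
      nlinarith [mul_le_mul_of_nonneg_left h2 (show (0:ℝ) ≤ 2*(n:ℝ)+1 by linarith)]
    have hsq : (c * s)^2 ≤ ((4:ℝ)^n)^2 :=
      calc (c * s)^2 = c^2 * (Real.pi * n) := by rw [mul_pow, hs2]
        _ ≤ c^2 * ((2 * n + 1) * Real.Wallis.W n) :=
            mul_le_mul_of_nonneg_left h1 (sq_nonneg c)
        _ = (16:ℝ)^n := by rw [← hkey]; ring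
        _ = ((4:ℝ)^n)^2 := by rw [h16]; ring
    exact (pow_le_pow_iff_left₀ (by positivity) h4pos.le two_ne_zero).mp hsq
  -- lower bound
  have hlb : 4 ^ n / s * (1 - 1 / (4 * (n:ℝ))) ≤ c := by
    have hx : (0:ℝ) < 1 - 1 / (4 * (n:ℝ)) := by
      rw [sub_pos, div_lt_one (by linarith)]; linarith
    rw [div_mul_eq_mul_div, div_le_iff₀ hspos]
    have h1 : (16:ℝ)^n ≤ c^2 * ((2 * (n:ℝ) + 1) * (Real.pi / 2)) := by
      rw [← hkey]
      have := mul_le_mul_of_nonneg_left hWle (show (0:ℝ) ≤ c^2 * (2*(n:ℝ)+1) by positivity)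
      nlinarith
    have h2 : (1 - 1 / (4 * (n:ℝ)))^2 * ((2 * (n:ℝ) + 1) * (Real.pi / 2)) ≤ Real.pi * n := by
      have h3 : (1 - 1 / (4 * (n:ℝ)))^2 * (2 * (n:ℝ) + 1) ≤ 2 * n := by
        rw [show (1:ℝ) - 1 / (4 * (n:ℝ)) = (4 * n - 1)/(4 * n) by
          field_simp]
        rw [div_pow, div_mul_eq_mul_div, div_le_iff₀ (by positivity)]
        nlinarith
      nlinarith
    have hsq : ((4:ℝ)^n * (1 - 1 / (4 * (n:ℝ))))^2 ≤ (c * s)^2 :=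
      calc ((4:ℝ)^n * (1 - 1 / (4 * (n:ℝ))))^2
          = (16:ℝ)^n * (1 - 1 / (4 * (n:ℝ)))^2 := by rw [h16]; ring
        _ ≤ c^2 * ((2 * (n:ℝ) + 1) * (Real.pi / 2)) * (1 - 1 / (4 * (n:ℝ)))^2 :=
            mul_le_mul_of_nonneg_right h1 (sq_nonneg _)
        _ = c^2 * ((1 - 1 / (4 * (n:ℝ)))^2 * ((2 * (n:ℝ) + 1) * (Real.pi / 2))) := by ring
        _ ≤ c^2 * (Real.pi * n) := mul_le_mul_of_nonneg_left h2 (sq_nonneg c)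
        _ = (c * s)^2 := by rw [mul_pow, hs2]
    exact (pow_le_pow_iff_left₀ (by positivity) (by positivity) two_ne_zero).mp hsq
  refine ⟨?_, hlb, hub⟩
  have h5 : (0:ℝ) < 1 + 1 / (n:ℝ) := by positivity
  calc c ≤ 4 ^ n / s := hub
    _ = 4 ^ n / s * 1 := (mul_one _).symm
    _ ≤ 4 ^ n / s * (1 + 1 / (n:ℝ)) := by
        apply mul_le_mul_of_nonneg_left _ (by positivity)
        have : (0:ℝ) ≤ 1 / (n:ℝ) := by positivity
        linarith
end

section
/- Let f_{p,q} be the power series coefficients of F(x,y) = 1/((1 - x/3 - 2y/3)(1 - 2x/3 - y/3)). Then the diagonal sequence f_{n,n} converges to 3 as n → ∞. -/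
open MvPowerSeries Filter

/-- The power series `F(x,y) = 1/((1 - x/3 - 2y/3)(1 - 2x/3 - y/3))`. -/
noncomputable def Fseries : MvPowerSeries (Fin 2) ℝ :=
  ((1 - MvPowerSeries.C (σ := Fin 2) (R := ℝ) (1/3) * MvPowerSeries.X 0
      - MvPowerSeries.C (σ := Fin 2) (R := ℝ) (2/3) * MvPowerSeries.X 1) *
    (1 - MvPowerSeries.C (σ := Fin 2) (R := ℝ) (2/3) * MvPowerSeries.X 0
      - MvPowerSeries.C (σ := Fin 2) (R := ℝ) (1/3) * MvPowerSeries.X 1))⁻¹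


/-- index `(p,q)` as a `Fin 2 →₀ ℕ` -/
noncomputable def dd (p q : ℕ) : Fin 2 →₀ ℕ := Finsupp.single 0 p + Finsupp.single 1 q

@[simp] lemma dd_apply0 (p q : ℕ) : dd p q 0 = p := by
  simp [dd, Finsupp.single_apply]

@[simp] lemma dd_apply1 (p q : ℕ) : dd p q 1 = q := by
  simp [dd, Finsupp.single_apply]

lemma dd_eq (m : Fin 2 →₀ ℕ) : m = dd (m 0) (m 1) := by
  ext i
  fin_cases i <;> simp

lemma dd_eq_zero_iff (p q : ℕ) : dd p q = 0 ↔ p = 0 ∧ q = 0 := by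
  constructor
  · intro h
    constructor
    · have := congrArg (fun f => f 0) h; simpa using this
    · have := congrArg (fun f => f 1) h; simpa using this
  · rintro ⟨rfl, rfl⟩; simp [dd]

lemma e0_le_dd (p q : ℕ) : Finsupp.single (0 : Fin 2) 1 ≤ dd p q ↔ 1 ≤ p := by
  rw [Finsupp.single_le_iff]; simp

lemma e1_le_dd (p q : ℕ) : Finsupp.single (1 : Fin 2) 1 ≤ dd p q ↔ 1 ≤ q := by
  rw [Finsupp.single_le_iff]; simp

lemma dd_sub_e0 (p q : ℕ) : dd p q - Finsupp.single (0 : Fin 2) 1 = dd (p - 1) q := by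
  ext i
  fin_cases i <;> simp [Finsupp.sub_apply]

lemma dd_sub_e1 (p q : ℕ) : dd p q - Finsupp.single (1 : Fin 2) 1 = dd p (q - 1) := by
  ext i
  fin_cases i <;> simp [Finsupp.sub_apply]

/-- candidate inverse of `1 - c X0 - d X1` -/
noncomputable def G (c d : ℝ) : MvPowerSeries (Fin 2) ℝ :=
  fun m => ((m 0 + m 1).choose (m 0) : ℝ) * c ^ (m 0) * d ^ (m 1)

lemma coeff_G (c d : ℝ) (p q : ℕ) :
    MvPowerSeries.coeff (R := ℝ) (dd p q) (G c d) = ((p + q).choose p : ℝ) * c ^ p * d ^ q := by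
  rw [MvPowerSeries.coeff_apply]
  simp [G]

lemma C_mul_X (c : ℝ) (i : Fin 2) :
    MvPowerSeries.C (σ := Fin 2) (R := ℝ) c * MvPowerSeries.X i
      = MvPowerSeries.monomial (R := ℝ) (Finsupp.single i 1) c := by
  rw [MvPowerSeries.X_def, ← MvPowerSeries.monomial_zero_eq_C_apply,
    MvPowerSeries.monomial_mul_monomial]
  simp

lemma denom_mul_G (c d : ℝ) :
    (1 - MvPowerSeries.C (σ := Fin 2) (R := ℝ) c * MvPowerSeries.X 0
       - MvPowerSeries.C (σ := Fin 2) (R := ℝ) d * MvPowerSeries.X 1) * G c d = 1 := by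
  ext m
  rw [dd_eq m]
  generalize m 0 = p
  generalize m 1 = q
  rw [sub_mul, sub_mul, one_mul, map_sub, map_sub, C_mul_X, C_mul_X,
    MvPowerSeries.coeff_monomial_mul, MvPowerSeries.coeff_monomial_mul,
    MvPowerSeries.coeff_one]
  simp only [e0_le_dd, e1_le_dd, dd_sub_e0, dd_sub_e1, dd_eq_zero_iff, coeff_G]
  rcases Nat.eq_zero_or_pos p with hp | hp <;> rcases Nat.eq_zero_or_pos q with hq | hq
  · subst hp; subst hq; norm_num
  · subst hp
    rw [if_neg (by omega), if_pos (show 1 ≤ q from hq), if_neg (by omega)]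
    obtain ⟨q', rfl⟩ : ∃ q', q = q' + 1 := ⟨q - 1, by omega⟩
    simp [pow_succ]
    ring
  · subst hq
    rw [if_pos (show 1 ≤ p from hp), if_neg (by omega), if_neg (by omega)]
    obtain ⟨p', rfl⟩ : ∃ p', p = p' + 1 := ⟨p - 1, by omega⟩
    simp [pow_succ]
    ring
  · rw [if_pos (show 1 ≤ p from hp), if_pos (show 1 ≤ q from hq), if_neg (by omega)]
    obtain ⟨p', rfl⟩ : ∃ p', p = p' + 1 := ⟨p - 1, by omega⟩
    obtain ⟨q', rfl⟩ : ∃ q', q = q' + 1 := ⟨q - 1, by omega⟩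
    have pascal : ((p' + 1 + (q' + 1)).choose (p' + 1) : ℝ)
        = ((p' + (q' + 1)).choose p' : ℝ) + ((p' + 1 + q').choose (p' + 1) : ℝ) := by
      have e1 : p' + (q' + 1) = p' + q' + 1 := by omega
      have e2 : p' + 1 + q' = p' + q' + 1 := by omega
      rw [show (p' + 1 + (q' + 1)) = (p' + q' + 1) + 1 by omega, e1, e2, Nat.choose_succ_succ']
      push_cast
      ring
    simp only [Nat.add_sub_cancel]
    rw [pascal]
    ring

noncomputable def fc (p q : ℕ) : ℝ := MvPowerSeries.coeff (R := ℝ) (dd p q) Fseries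

lemma key :
    G (1/3) (2/3) - G (2/3) (1/3)
      = MvPowerSeries.C (σ := Fin 2) (R := ℝ) (1/3) * MvPowerSeries.X 1 * Fseries
        - MvPowerSeries.C (σ := Fin 2) (R := ℝ) (1/3) * MvPowerSeries.X 0 * Fseries := by
  set A : MvPowerSeries (Fin 2) ℝ :=
    1 - MvPowerSeries.C (σ := Fin 2) (R := ℝ) (1/3) * MvPowerSeries.X 0
      - MvPowerSeries.C (σ := Fin 2) (R := ℝ) (2/3) * MvPowerSeries.X 1 with hAdef
  set B : MvPowerSeries (Fin 2) ℝ :=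
    1 - MvPowerSeries.C (σ := Fin 2) (R := ℝ) (2/3) * MvPowerSeries.X 0
      - MvPowerSeries.C (σ := Fin 2) (R := ℝ) (1/3) * MvPowerSeries.X 1 with hBdef
  have hA : A * G (1/3) (2/3) = 1 := denom_mul_G (1/3) (2/3)
  have hB : B * G (2/3) (1/3) = 1 := denom_mul_G (2/3) (1/3)
  have hABc : MvPowerSeries.constantCoeff (σ := Fin 2) (R := ℝ) (A * B) = 1 := by
    rw [map_mul, hAdef, hBdef]
    simp
  have hAB0 : A * B ≠ 0 := by
    intro h
    rw [h, map_zero] at hABc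
    exact zero_ne_one hABc
  have hF : Fseries * (A * B) = 1 :=
    MvPowerSeries.inv_mul_cancel _ (by rw [hABc]; exact one_ne_zero)
  apply mul_right_cancel₀ hAB0
  have h23 : MvPowerSeries.C (σ := Fin 2) (R := ℝ) (2/3)
      = MvPowerSeries.C (σ := Fin 2) (R := ℝ) (1/3) + MvPowerSeries.C (σ := Fin 2) (R := ℝ) (1/3) := by
    rw [← map_add]; norm_num
  calc (G (1/3) (2/3) - G (2/3) (1/3)) * (A * B)
      = (A * G (1/3) (2/3)) * B - (B * G (2/3) (1/3)) * A := by ring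
    _ = B - A := by rw [hA, hB]; ring
    _ = (MvPowerSeries.C (σ := Fin 2) (R := ℝ) (1/3) * MvPowerSeries.X 1
          - MvPowerSeries.C (σ := Fin 2) (R := ℝ) (1/3) * MvPowerSeries.X 0) * 1 := by
        rw [mul_one, hAdef, hBdef, h23]; ring
    _ = (MvPowerSeries.C (σ := Fin 2) (R := ℝ) (1/3) * MvPowerSeries.X 1
          - MvPowerSeries.C (σ := Fin 2) (R := ℝ) (1/3) * MvPowerSeries.X 0) * (Fseries * (A * B)) := by
        rw [hF]
    _ = (MvPowerSeries.C (σ := Fin 2) (R := ℝ) (1/3) * MvPowerSeries.X 1 * Fseries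
          - MvPowerSeries.C (σ := Fin 2) (R := ℝ) (1/3) * MvPowerSeries.X 0 * Fseries) * (A * B) := by
        ring

lemma master (p q : ℕ) :
    ((p+q).choose p : ℝ) * (1/3)^p * (2/3)^q - ((p+q).choose p : ℝ) * (2/3)^p * (1/3)^q
      = (if 1 ≤ q then (1/3) * fc p (q-1) else 0)
        - (if 1 ≤ p then (1/3) * fc (p-1) q else 0) := by
  have h := congrArg (MvPowerSeries.coeff (R := ℝ) (dd p q)) key
  rw [map_sub, coeff_G, coeff_G, map_sub, C_mul_X, C_mul_X,
    MvPowerSeries.coeff_monomial_mul, MvPowerSeries.coeff_monomial_mul] at h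
  simp only [e1_le_dd, e0_le_dd, dd_sub_e1, dd_sub_e0] at h
  exact h

lemma boundary (m : ℕ) : fc 0 m = 3 * ((2/3)^(m+1) - (1/3)^(m+1)) := by
  have h := master 0 (m+1)
  rw [if_pos (show 1 ≤ m+1 by omega), if_neg (show ¬ (1 ≤ 0) by omega)] at h
  simp only [Nat.add_sub_cancel, Nat.zero_add, Nat.choose_zero_right, Nat.cast_one] at h
  norm_num at h ⊢
  linarith

lemma step (p q : ℕ) :
    fc (p+1) q = fc p (q+1)
      + 3 * (((p+q+2).choose (p+1) : ℝ) * (1/3)^(p+1) * (2/3)^(q+1)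
          - ((p+q+2).choose (p+1) : ℝ) * (2/3)^(p+1) * (1/3)^(q+1)) := by
  have h := master (p+1) (q+1)
  rw [if_pos (by omega), if_pos (by omega)] at h
  simp only [Nat.add_sub_cancel] at h
  have e : p + 1 + (q + 1) = p + q + 2 := by omega
  rw [e] at h
  linarith

noncomputable def wA (n r : ℕ) : ℝ := ((2*n+1).choose r : ℝ) * (1/3)^r * (2/3)^(2*n+1-r)
noncomputable def wB (n r : ℕ) : ℝ := ((2*n+1).choose r : ℝ) * (2/3)^r * (1/3)^(2*n+1-r)

lemma diag (n : ℕ) : ∀ p, p ≤ n →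
    fc p (2*n - p) = fc 0 (2*n) + 3 * ∑ r ∈ Finset.Icc 1 p, (wA n r - wB n r) := by
  intro p
  induction p with
  | zero => intro _; simp
  | succ p ih =>
    intro hp
    have hp' : p ≤ n := by omega
    have hq : 2*n - p = (2*n - (p+1)) + 1 := by omega
    have hstep := step p (2*n - (p+1))
    have e1 : p + (2*n - (p+1)) + 2 = 2*n + 1 := by omega
    rw [e1, show 2*n - (p+1) + 1 = 2*n - p by omega] at hstep
    rw [hstep, ih hp', Finset.sum_Icc_succ_top (by omega : 1 ≤ p + 1)]
    simp only [wA, wB]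
    rw [show 2*n + 1 - (p+1) = 2*n - p by omega]
    ring

lemma range_split (n : ℕ) (g : ℕ → ℝ) :
    ∑ r ∈ Finset.range (n+1), g r = g 0 + ∑ r ∈ Finset.Icc 1 n, g r := by
  rw [Finset.range_eq_Ico, ← Finset.sum_Ico_consecutive _ (Nat.zero_le 1) (by omega : 1 ≤ n+1),
    ← Finset.Ico_add_one_right_eq_Icc]
  simp

lemma fc_diag (n : ℕ) :
    fc n n = 3 * ∑ r ∈ Finset.range (n+1), (wA n r - wB n r) := by
  have h := diag n n le_rfl
  rw [show 2*n - n = n by omega] at h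
  rw [h, boundary (2*n), range_split n (fun r => wA n r - wB n r)]
  have h0 : wA n 0 - wB n 0 = (2/3)^(2*n+1) - (1/3)^(2*n+1) := by
    simp [wA, wB]
  rw [h0]
  ring

lemma total_one (n : ℕ) : ∑ r ∈ Finset.range (2*n+2), wA n r = 1 := by
  have h := add_pow (1/3 : ℝ) (2/3) (2*n+1)
  have h1 : ((1:ℝ)/3 + 2/3) = 1 := by norm_num
  rw [h1, one_pow] at h
  rw [show 2*n+2 = 2*n+1+1 by omega]
  rw [h]
  apply Finset.sum_congr rfl
  intro r _
  simp [wA]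
  ring

lemma reflect_sum (n : ℕ) :
    ∑ r ∈ Finset.range (n+1), wA n r + ∑ r ∈ Finset.range (n+1), wB n r = 1 := by
  have hswap : ∀ r ∈ Finset.range (n+1), wB n r = wA n (2*n+1-r) := by
    intro r hr
    rw [Finset.mem_range] at hr
    have hr' : r ≤ 2*n+1 := by omega
    simp only [wA, wB]
    rw [Nat.choose_symm hr', show 2*n+1 - (2*n+1-r) = r by omega]
    ring
  rw [Finset.sum_congr rfl hswap]
  have hrefl : ∑ r ∈ Finset.range (n+1), wA n (2*n+1-r)
      = ∑ r ∈ Finset.range (n+1), wA n (n+1+r) := by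
    have := Finset.sum_range_reflect (fun r => wA n (n+1+r)) (n+1)
    rw [← this]
    apply Finset.sum_congr rfl
    intro j hj
    rw [Finset.mem_range] at hj
    congr 1
    omega
  rw [hrefl, ← total_one n, show 2*n+2 = (n+1) + (n+1) by omega]
  exact (Finset.sum_range_add (wA n) (n+1) (n+1)).symm

lemma wB_nonneg (n r : ℕ) : 0 ≤ wB n r := by
  simp only [wB]
  positivity

lemma pow_helper : ∀ m : ℕ, (2:ℝ)^(2*m+1) * 2^m * (1/3)^(2*m+1) = (2/3)*(8/9)^m := by
  intro m
  induction m with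
  | zero => norm_num
  | succ k ih =>
    have e1 : (2:ℝ)^(2*(k+1)+1) = 2^(2*k+1) * 4 := by
      rw [show 2*(k+1)+1 = (2*k+1)+2 by omega, pow_add]; norm_num
    have e2 : (2:ℝ)^(k+1) = 2^k * 2 := by rw [pow_succ]
    have e3 : (1/3:ℝ)^(2*(k+1)+1) = (1/3)^(2*k+1) * (1/9) := by
      rw [show 2*(k+1)+1 = (2*k+1)+2 by omega, pow_add]; norm_num
    have e4 : (8/9:ℝ)^(k+1) = (8/9)^k * (8/9) := by rw [pow_succ]
    rw [e1, e2, e3, e4]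
    linear_combination (8/9:ℝ) * ih

lemma wB_le (n : ℕ) (r : ℕ) (hr : r ≤ n) : wB n r ≤ (2/3)*(8/9)^n := by
  have h1 : ((2*n+1).choose r : ℝ) ≤ 2^(2*n+1) := by
    have : (2*n+1).choose r ≤ 2^(2*n+1) := by
      calc (2*n+1).choose r ≤ ∑ i ∈ Finset.range (2*n+1+1), (2*n+1).choose i :=
            Finset.single_le_sum (fun i _ => Nat.zero_le _) (Finset.mem_range.mpr (by omega))
        _ = 2^(2*n+1) := Nat.sum_range_choose (2*n+1)
    exact_mod_cast this
  have h2 : (2/3:ℝ)^r * (1/3)^(2*n+1-r) = 2^r * (1/3)^(2*n+1) := by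
    have e : (2/3:ℝ) = 2 * (1/3) := by norm_num
    rw [e, mul_pow, mul_assoc, ← pow_add, show r + (2*n+1-r) = 2*n+1 by omega]
  have h3 : (2:ℝ)^r ≤ 2^n := by
    apply pow_le_pow_right₀ (by norm_num) hr
  calc wB n r = ((2*n+1).choose r : ℝ) * ((2/3)^r * (1/3)^(2*n+1-r)) := by
        simp only [wB]; ring
    _ = ((2*n+1).choose r : ℝ) * (2^r * (1/3)^(2*n+1)) := by rw [h2]
    _ ≤ 2^(2*n+1) * (2^n * (1/3)^(2*n+1)) := by
        apply mul_le_mul h1 _ (by positivity) (by positivity)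
        apply mul_le_mul_of_nonneg_right h3 (by positivity)
    _ = (2/3)*(8/9)^n := by rw [← pow_helper n]; ring

lemma sumB_le (n : ℕ) : ∑ r ∈ Finset.range (n+1), wB n r ≤ ((n:ℝ)+1) * ((2/3)*(8/9)^n) := by
  calc ∑ r ∈ Finset.range (n+1), wB n r
      ≤ ∑ _r ∈ Finset.range (n+1), (2/3)*(8/9:ℝ)^n := by
        apply Finset.sum_le_sum
        intro r hr
        exact wB_le n r (Nat.lt_succ_iff.mp (Finset.mem_range.mp hr))
    _ = ((n:ℝ)+1) * ((2/3)*(8/9)^n) := by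
        simp [Finset.sum_const, Finset.card_range]

lemma fc_closed (n : ℕ) :
    fc n n = 3 - 6 * ∑ r ∈ Finset.range (n+1), wB n r := by
  have h := reflect_sum n
  rw [fc_diag n, Finset.sum_sub_distrib]
  linarith

lemma final_limit :
    Tendsto (fun n : ℕ => fc n n) atTop (nhds 3) := by
  have hgeo : Tendsto (fun n : ℕ => (8/9:ℝ)^n) atTop (nhds 0) :=
    tendsto_pow_atTop_nhds_zero_of_lt_one (by norm_num) (by norm_num)
  have hn : Tendsto (fun n : ℕ => (n:ℝ) * (8/9)^n) atTop (nhds 0) := by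
    have hs : Summable (fun n : ℕ => ((n : ℝ) ^ 1 * (8/9) ^ n)) := by
      apply Summable.of_norm
      apply summable_norm_pow_mul_geometric_of_norm_lt_one
      rw [Real.norm_eq_abs, abs_of_pos] <;> norm_num
    have := hs.tendsto_atTop_zero
    simpa using this
  have hM : Tendsto (fun n : ℕ => ((n:ℝ)+1)*((2/3)*(8/9)^n)) atTop (nhds 0) := by
    have h1 := (hn.const_mul (2/3:ℝ)).add (hgeo.const_mul (2/3:ℝ))
    simp only [mul_zero, add_zero] at h1
    apply h1.congr
    intro n
    ring
  have hSB : Tendsto (fun n : ℕ => ∑ r ∈ Finset.range (n+1), wB n r) atTop (nhds 0) :=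
    squeeze_zero (fun n => Finset.sum_nonneg fun r _ => wB_nonneg n r)
      (fun n => sumB_le n) hM
  have h2 := (tendsto_const_nhds (x := (3:ℝ)) (f := atTop)).sub (hSB.const_mul 6)
  simp only [mul_zero, sub_zero] at h2
  apply Tendsto.congr _ h2
  intro n
  exact (fc_closed n).symm

/-- The diagonal coefficients of `F(x,y) = 1/((1 - x/3 - 2y/3)(1 - 2x/3 - y/3))`
converge to `3`. -/
theorem diagonal_tendsto_three :
    Tendsto (fun n : ℕ =>
      MvPowerSeries.coeff (R := ℝ) (Finsupp.single (0 : Fin 2) n + Finsupp.single (1 : Fin 2) n)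
        Fseries) atTop (nhds 3) := by
  exact final_limit
end

section
/- For P(x,y) = 1 - x - y and any minimal point (a, 1-a) of V(P) with a, 1-a ≠ 0, the logarithmic gradient (-a, -(1-a)) is a complex scalar multiple of a real vector, i.e., a * conj(1-a) is real, which forces a to be real when (a, 1-a) is minimal. -/
/-- For `P = 1 - x - y`, at a minimal point `(a, 1-a)` of `V(P)` (both coordinates nonzero,
and no point of `V(P)` with both coordinate moduli strictly smaller), the logarithmic
gradient `(-a, -(1-a))` is a scalar multiple of a real vector: `a * conj(1-a)` is real,
and in fact `a` is real. -/
theorem minimal_point_log_gradient_real (a : ℂ) (ha : a ≠ 0) (ha' : 1 - a ≠ 0)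
    (hmin : ¬ ∃ b : ℂ, ‖b‖ < ‖a‖ ∧
      ‖1 - b‖ < ‖1 - a‖) :
    (a * (starRingEnd ℂ) (1 - a)).im = 0 ∧ a.im = 0 := by
  set r := ‖a‖ with hr
  set s := ‖1 - a‖ with hs
  have hr0 : 0 < r := by simpa [hr] using norm_pos_iff.mpr ha
  have hs0 : 0 < s := by simpa [hs] using norm_pos_iff.mpr ha'
  -- Step 1 : r + s ≤ 1
  have hle : r + s ≤ 1 := by
    by_contra hgt
    push_neg at hgt
    apply hmin
    set m : ℝ := max (1 - s) 0 with hm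
    have hmr : m < r := by
      rcases max_cases (1 - s) 0 with ⟨h1, _⟩ | ⟨h1, _⟩ <;> rw [hm, h1] <;> linarith
    set b : ℝ := (m + r) / 2 with hb
    have hb0 : 0 ≤ b := by
      have : (0:ℝ) ≤ m := le_max_right _ _
      rw [hb]; linarith
    have hbr : b < r := by rw [hb]; linarith
    have hbs : 1 - s < b := by
      have : 1 - s ≤ m := le_max_left _ _
      rw [hb]; linarith
    refine ⟨(b : ℂ), ?_, ?_⟩
    · rwa [Complex.norm_real, Real.norm_eq_abs, abs_of_nonneg hb0]
    · have : (1 : ℂ) - (b : ℂ) = ((1 - b : ℝ) : ℂ) := by push_cast; ring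
      rw [this, Complex.norm_real, Real.norm_eq_abs]
      rcases le_or_gt b 1 with hb1 | hb1
      · rw [abs_of_nonneg (by linarith)]; linarith
      · rw [abs_of_nonpos (by linarith)]
        -- need b - 1 < s; since b < r it suffices r - 1 ≤ s, by triangle ineq
        have htri : r ≤ 1 + s := by
          have h3 := norm_add_le (a - 1) 1
          have h4 : ‖a - 1‖ = s := by
            rw [hs, ← norm_neg]; ring_nf
          simp [h4] at h3
          linarith
        linarith
  -- Step 2 : 1 ≤ r + s by triangle inequality
  have hge : 1 ≤ r + s := by
    have := norm_add_le a (1 - a)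
    simpa using this
  have heq : ‖a + (1 - a)‖ = r + s := by
    simp; linarith
  -- equality in triangle inequality : SameRay
  have hray : SameRay ℝ a (1 - a) := by
    rw [sameRay_iff_norm_add]
    simpa using heq
  obtain ⟨u, v, hu, hv, huv⟩ := hray.exists_pos ha ha'
  have him : a.im = 0 := by
    have h1 : (u • a).im = (v • (1 - a)).im := by rw [huv]
    simp [Complex.smul_im, Complex.sub_im] at h1
    nlinarith
  refine ⟨?_, him⟩
  simp [Complex.mul_im, Complex.conj_im, Complex.conj_re, Complex.sub_im, him]
end
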